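/- Let n ≥ 1 be an integer, let g : (0,∞) → [0,∞) be measurable with s^{n−1} g(s) integrable on (0,∞), and set G(λ) = (2π^{n/2}/Γ(n/2)) ∫_0^λ s^{n−1} g(s) ds. Assume g is essentially positive, i.e. there exists ε > 0 with g(x) > 0 for all x ∈ (0, ε], and assume that r ↦ g(1/r) belongs to OR(β′,α′) for some reals β′ ≤ α′. Let α, β be reals with β ≤ α < 0. If the function r ↦ G(1/r) belongs to OR(β,α), then the function r ↦ g(1/r) belongs to OR(β+n, α+n) and G(1/r) ≍ g(1/r)/r^n as r → ∞. -/

import Mathlib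

/-!
Put `x = 1 / r` and `G x = c ∫₀ˣ s ^ (n - 1) g s ds`. Because `g (1 / ·)` is O-regularly varying,
`g s` is comparable to `g x` on every window `[x / K, x]`; integrating over `(x / 2, x]` gives
`G x ≳ x ^ n g x`. Because the upper index of `G (1 / ·)` is negative, there is a fixed `K` with
`G (x / K) ≤ G x / 2`, so `G x ≤ 2 c ∫_{x/K}^x s ^ (n - 1) g s ds ≲ x ^ n g x`. Hence
`G (1 / r) ≍ g (1 / r) / r ^ n`, and O-regular variation passes from `r ↦ G (1 / r) r ^ n`, whose
indices are those of `G (1 / ·)` shifted by `n`, to the comparable function `g (1 / ·)`.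
-/

open MeasureTheory Filter Real Set Asymptotics

/-- `L ∈ OR(β,α)`: O-regular variation at infinity with Matuszewska indices
between `β` and `α`. -/
def MemOR (L : ℝ → ℝ) (β α : ℝ) : Prop :=
  ∀ δ : ℝ, 0 < δ → ∃ C : ℝ, 0 < C ∧ ∃ D : ℝ, 0 < D ∧ ∃ lam₀ : ℝ, 0 < lam₀ ∧
    ∀ t : ℝ, 1 ≤ t → ∀ lam : ℝ, lam₀ ≤ lam →
      D * t ^ (β - δ) ≤ L (lam * t) / L lam ∧ L (lam * t) / L lam ≤ C * t ^ (α + δ)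

open Topology

theorem rpow_le_rpow_abs {t K : ℝ} (x : ℝ) (ht : 1 ≤ t) (htK : t ≤ K) : t ^ x ≤ K ^ |x| :=
  (rpow_le_rpow_of_exponent_le ht (le_abs_self x)).trans
    (rpow_le_rpow (by linarith) htK (abs_nonneg x))

theorem rpow_neg_abs_le_rpow {t K : ℝ} (x : ℝ) (ht : 1 ≤ t) (htK : t ≤ K) : K ^ (-|x|) ≤ t ^ x :=
  (rpow_le_rpow_of_nonpos (by linarith) htK (neg_nonpos.2 (abs_nonneg x))).trans
    (rpow_le_rpow_of_exponent_le ht (neg_abs_le x))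

theorem div_le_mul_mul_div {a b a' b' c c' : ℝ} (ha : 0 ≤ a) (hb : 0 < b) (hc : 0 ≤ c)
    (hc' : 0 < c') (h : a' ≤ c * a) (h' : b ≤ c' * b') : a' / b' ≤ c * c' * (a / b) := by
  have hb' : 0 < b' := pos_of_mul_pos_right (hb.trans_le h') hc'.le
  calc a' / b' ≤ c * a / (b / c') :=
        div_le_div₀ (by positivity) h (div_pos hb hc') ((div_le_iff₀' hc').2 h')
    _ = c * c' * (a / b) := by field_simp

theorem Filter.Eventually.forall_one_le_mul {p : ℝ → Prop} (h : ∀ᶠ r in atTop, p r) :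
    ∀ᶠ lam in atTop, ∀ t ≥ 1, p (lam * t) := by
  obtain ⟨a, ha⟩ := eventually_atTop.1 h
  filter_upwards [eventually_ge_atTop (max a 0)] with lam hlam t ht
  exact ha _ ((le_of_max_le_left hlam).trans (le_mul_of_one_le_right (le_of_max_le_right hlam) ht))

theorem Asymptotics.IsTheta.comp_tendsto {α β E F : Type*} [Norm E] [Norm F] {l : Filter α}
    {l' : Filter β} {f : α → E} {g : α → F} (h : f =Θ[l] g) {k : β → α} (hk : Tendsto k l' l) : (f ∘ k) =Θ[l'] (g ∘ k) :=
  ⟨h.1.comp_tendsto hk, h.2.comp_tendsto hk⟩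

theorem isTheta_of_le_of_le {α : Type*} {l : Filter α} {u v : α → ℝ} {c₁ c₂ : ℝ} (hc₁ : 0 < c₁)
    (hv : ∀ᶠ x in l, 0 ≤ v x) (hlow : ∀ᶠ x in l, c₁ * v x ≤ u x)
    (hup : ∀ᶠ x in l, u x ≤ c₂ * v x) : u =Θ[l] v := by
  refine ⟨IsBigO.of_bound c₂ ?_, IsBigO.of_bound c₁⁻¹ ?_⟩
  all_goals
    filter_upwards [hv, hlow, hup] with x hv hlow hup
    have hu : 0 ≤ u x := (mul_nonneg hc₁.le hv).trans hlow
    rw [Real.norm_of_nonneg hu, Real.norm_of_nonneg hv]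
  · exact hup
  · rwa [← div_eq_inv_mul, le_div_iff₀' hc₁]

theorem memOR_iff_eventually {L : ℝ → ℝ} {β α : ℝ} :
    MemOR L β α ↔ ∀ δ > 0, ∃ C > 0, ∃ D > 0, ∀ᶠ lam in atTop, ∀ t ≥ 1,
      D * t ^ (β - δ) ≤ L (lam * t) / L lam ∧ L (lam * t) / L lam ≤ C * t ^ (α + δ) := by
  refine ⟨fun h δ hδ => ?_, fun h δ hδ => ?_⟩
  · obtain ⟨C, hC, D, hD, lam₀, -, hb⟩ := h δ hδ
    exact ⟨C, hC, D, hD, eventually_atTop.2 ⟨lam₀, fun lam hlam t ht => hb t ht lam hlam⟩⟩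
  · obtain ⟨C, hC, D, hD, hb⟩ := h δ hδ
    obtain ⟨lam₀, hb⟩ := eventually_atTop.1 hb
    exact ⟨C, hC, D, hD, max lam₀ 1, by positivity,
      fun t ht lam hlam => hb lam (le_of_max_le_left hlam) t ht⟩

namespace MemOR

variable {L : ℝ → ℝ} {β α : ℝ}

theorem mul_rpow (h : MemOR L β α) (p : ℝ) :
    MemOR (fun r => L r * r ^ p) (β + p) (α + p) := by
  rw [memOR_iff_eventually] at h ⊢
  intro δ hδ
  obtain ⟨C, hC, D, hD, hb⟩ := h δ hδ
  refine ⟨C, hC, D, hD, ?_⟩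
  filter_upwards [hb, eventually_gt_atTop 0] with lam hb hlam t ht
  have ht0 : 0 < t := by linarith
  have hratio : L (lam * t) * (lam * t) ^ p / (L lam * lam ^ p) = L (lam * t) / L lam * t ^ p := by
    rw [mul_div_mul_comm, Real.mul_rpow hlam.le ht0.le,
      mul_div_cancel_left₀ _ (rpow_pos_of_pos hlam p).ne']
  rw [hratio, add_sub_right_comm, add_right_comm, rpow_add ht0, rpow_add ht0, ← mul_assoc,
    ← mul_assoc]
  exact ⟨mul_le_mul_of_nonneg_right (hb t ht).1 (by positivity),
    mul_le_mul_of_nonneg_right (hb t ht).2 (by positivity)⟩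

theorem congr_isTheta {L' : ℝ → ℝ} (h : MemOR L β α) (hLL' : L =Θ[atTop] L')
    (hL : ∀ᶠ r in atTop, 0 < L r) (hL' : ∀ᶠ r in atTop, 0 < L' r) : MemOR L' β α := by
  obtain ⟨c, hc, hL'L⟩ := hLL'.2.exists_pos
  obtain ⟨c', hc', hLL'⟩ := hLL'.1.exists_pos
  have hcmp : ∀ᶠ r in atTop, 0 < L r ∧ 0 < L' r ∧ L' r ≤ c * L r ∧ L r ≤ c' * L' r := by
    filter_upwards [hL, hL', hL'L.bound, hLL'.bound] with r h h' h₁ h₂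
    rw [Real.norm_of_nonneg h.le, Real.norm_of_nonneg h'.le] at h₁ h₂
    exact ⟨h, h', h₁, h₂⟩
  rw [memOR_iff_eventually] at h ⊢
  intro δ hδ
  obtain ⟨C, hC, D, hD, hb⟩ := h δ hδ
  refine ⟨c * c' * C, by positivity, D / (c' * c), by positivity, ?_⟩
  filter_upwards [hb, hcmp, hcmp.forall_one_le_mul] with lam hb ⟨hpos, hpos', h₁, h₂⟩ hcmpt t ht
  obtain ⟨htpos, htpos', h₁t, h₂t⟩ := hcmpt t ht
  constructor
  · rw [div_mul_eq_mul_div, div_le_iff₀' (by positivity)]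
    exact ((hb t ht).1).trans (div_le_mul_mul_div htpos'.le hpos' hc'.le hc h₂t h₁)
  · calc L' (lam * t) / L' lam ≤ c * c' * (L (lam * t) / L lam) :=
          div_le_mul_mul_div htpos.le hpos hc.le hc' h₁t h₂
      _ ≤ c * c' * C * t ^ (α + δ) := by
          rw [mul_assoc _ C]; exact mul_le_mul_of_nonneg_left (hb t ht).2 (by positivity)

variable {φ : ℝ → ℝ}

theorem eventually_nhdsGT_zero (h : MemOR (fun r => φ (1 / r)) β α) {δ : ℝ} (hδ : 0 < δ) :
    ∃ C > 0, ∃ D > 0, ∀ᶠ x in 𝓝[>] 0, ∀ t ≥ 1,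
      D * t ^ (β - δ) ≤ φ (x / t) / φ x ∧ φ (x / t) / φ x ≤ C * t ^ (α + δ) := by
  obtain ⟨C, hC, D, hD, hb⟩ := memOR_iff_eventually.1 h δ hδ
  refine ⟨C, hC, D, hD, ?_⟩
  filter_upwards [tendsto_inv_nhdsGT_zero.eventually hb] with x hx
  simp only [div_eq_mul_inv, one_mul, mul_inv, inv_inv] at hx ⊢
  exact hx

theorem exists_bounds_nhdsGT_zero (h : MemOR (fun r => φ (1 / r)) β α)
    (hpos : ∀ᶠ x in 𝓝[>] 0, 0 < φ x) {K : ℝ} (hK : 0 < K) :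
    ∃ m > 0, ∃ M > 0, ∀ᶠ x in 𝓝[>] 0, ∀ s ∈ Icc (x / K) x, m * φ x ≤ φ s ∧ φ s ≤ M * φ x := by
  obtain ⟨C, hC, D, hD, hb⟩ := h.eventually_nhdsGT_zero one_pos
  refine ⟨D * K ^ (-|β - 1|), by positivity, C * K ^ |α + 1|, by positivity, ?_⟩
  filter_upwards [hb, hpos, self_mem_nhdsWithin] with x hb hφ (hx : 0 < x) s ⟨hs₁, hs₂⟩
  have hs : 0 < s := (div_pos hx hK).trans_le hs₁
  have ht₁ : 1 ≤ x / s := (one_le_div hs).2 hs₂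
  have htK : x / s ≤ K := (div_le_iff₀ hs).2 (by rwa [div_le_iff₀ hK, mul_comm] at hs₁)
  obtain ⟨hlo, hhi⟩ := hb (x / s) ht₁
  rw [div_div_cancel₀ hx.ne'] at hlo hhi
  constructor
  · rw [← le_div_iff₀ hφ]
    exact (mul_le_mul_of_nonneg_left (rpow_neg_abs_le_rpow _ ht₁ htK) hD.le).trans hlo
  · rw [← div_le_iff₀ hφ]
    exact hhi.trans (mul_le_mul_of_nonneg_left (rpow_le_rpow_abs _ ht₁ htK) hC.le)

theorem exists_eventually_le_mul (h : MemOR (fun r => φ (1 / r)) β α) (hα : α < 0)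
    (hpos : ∀ᶠ x in 𝓝[>] 0, 0 < φ x) {η : ℝ} (hη : 0 < η) :
    ∃ K ≥ 1, ∀ᶠ x in 𝓝[>] 0, φ (x / K) ≤ η * φ x := by
  obtain ⟨C, hC, _, _, hb⟩ := h.eventually_nhdsGT_zero (δ := -α / 2) (by linarith)
  have hlim : Tendsto (fun t : ℝ => C * t ^ (α + -α / 2)) atTop (𝓝 0) := by
    simpa using (tendsto_rpow_neg_atTop (y := -(α + -α / 2)) (by linarith)).const_mul C
  obtain ⟨K, hKη, hK⟩ := ((hlim.eventually (gt_mem_nhds hη)).and (eventually_ge_atTop 1)).exists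
  refine ⟨K, hK, ?_⟩
  filter_upwards [hb, hpos] with x hb hφ
  rw [← div_le_iff₀ hφ]
  exact (hb K hK).2.trans hKη.le

end MemOR

section RadialIntegral

variable {n : ℕ} {g : ℝ → ℝ} {x : ℝ}

theorem pow_mul_le_setIntegral_Ioc (hn : n ≠ 0) (hx : 0 < x) (hg0 : ∀ s ∈ Ioc 0 x, 0 ≤ g s)
    (hint : IntegrableOn (fun s => s ^ (n - 1) * g s) (Ioc 0 x)) {m : ℝ} (hm : 0 ≤ m)
    (hlow : ∀ s ∈ Ioc (x / 2) x, m * g x ≤ g s) :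
    m / 2 ^ n * (x ^ n * g x) ≤ ∫ s in Ioc 0 x, s ^ (n - 1) * g s := by
  have hgx : 0 ≤ m * g x := mul_nonneg hm (hg0 x ⟨hx, le_rfl⟩)
  have hsub : Ioc (x / 2) x ⊆ Ioc 0 x := Ioc_subset_Ioc_left (by positivity)
  calc m / 2 ^ n * (x ^ n * g x)
        = (x / 2) ^ (n - 1) * (m * g x) * volume.real (Ioc (x / 2) x) := by
        rw [volume_real_Ioc_of_le (by linarith), ← pow_sub_one_mul hn x,
          ← pow_sub_one_mul hn (2 : ℝ), div_pow]
        field_simp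
        ring
    _ ≤ ∫ s in Ioc (x / 2) x, s ^ (n - 1) * g s :=
        setIntegral_ge_of_const_le_real measurableSet_Ioc measure_Ioc_lt_top.ne
          (fun s hs => mul_le_mul (pow_le_pow_left₀ (by positivity) hs.1.le _) (hlow s hs) hgx
            (pow_nonneg ((by positivity : (0 : ℝ) ≤ x / 2).trans hs.1.le) _))
          (hint.mono_set hsub)
    _ ≤ ∫ s in Ioc 0 x, s ^ (n - 1) * g s :=
        setIntegral_mono_set hint
          ((ae_restrict_mem measurableSet_Ioc).mono fun s hs =>
            mul_nonneg (pow_nonneg hs.1.le _) (hg0 s hs))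
          hsub.eventuallyLE

theorem setIntegral_Ioc_le_pow_mul (hn : n ≠ 0) (hx : 0 < x) (hg0 : ∀ s ∈ Ioc 0 x, 0 ≤ g s)
    (hint : IntegrableOn (fun s => s ^ (n - 1) * g s) (Ioc 0 x)) {K M : ℝ} (hK : 1 ≤ K)
    (hM : 0 ≤ M) (hup : ∀ s ∈ Ioc (x / K) x, g s ≤ M * g x)
    (hhalf : ∫ s in Ioc 0 (x / K), s ^ (n - 1) * g s ≤ (∫ s in Ioc 0 x, s ^ (n - 1) * g s) / 2) :
    ∫ s in Ioc 0 x, s ^ (n - 1) * g s ≤ 2 * M * (x ^ n * g x) := by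
  have hxK : 0 < x / K := by positivity
  have hKx : x / K ≤ x := div_le_self hx.le hK
  have hMgx : 0 ≤ M * g x := mul_nonneg hM (hg0 x ⟨hx, le_rfl⟩)
  have hsplit : ∫ s in Ioc 0 x, s ^ (n - 1) * g s =
      (∫ s in Ioc 0 (x / K), s ^ (n - 1) * g s) + ∫ s in Ioc (x / K) x, s ^ (n - 1) * g s := by
    rw [← setIntegral_union (Ioc_disjoint_Ioc_of_le le_rfl) measurableSet_Ioc
      (hint.mono_set (Ioc_subset_Ioc_right hKx)) (hint.mono_set (Ioc_subset_Ioc_left hxK.le)),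
      Ioc_union_Ioc_eq_Ioc hxK.le hKx]
  have htail : ∫ s in Ioc (x / K) x, s ^ (n - 1) * g s ≤ M * (x ^ n * g x) :=
    calc ∫ s in Ioc (x / K) x, s ^ (n - 1) * g s
          ≤ ∫ _ in Ioc (x / K) x, x ^ (n - 1) * (M * g x) :=
          setIntegral_mono_on (hint.mono_set (Ioc_subset_Ioc_left hxK.le))
            (integrableOn_const measure_Ioc_lt_top.ne) measurableSet_Ioc fun s hs =>
              mul_le_mul (pow_le_pow_left₀ (hxK.trans hs.1).le hs.2 _) (hup s hs)
                (hg0 s ⟨hxK.trans hs.1, hs.2⟩) (by positivity)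
      _ = (x - x / K) * (x ^ (n - 1) * (M * g x)) := by
          rw [setIntegral_const, smul_eq_mul, volume_real_Ioc_of_le hKx]
      _ ≤ x * (x ^ (n - 1) * (M * g x)) :=
          mul_le_mul_of_nonneg_right (by linarith) (by positivity)
      _ = M * (x ^ n * g x) := by rw [← pow_sub_one_mul hn x]; ring
  linarith

theorem eventually_setIntegral_Ioc_pos (hint : IntegrableOn (fun s => s ^ (n - 1) * g s) (Ioi 0))
    (hgpos : ∀ᶠ x in 𝓝[>] 0, 0 < g x) :
    ∀ᶠ x in 𝓝[>] 0, 0 < ∫ s in Ioc 0 x, s ^ (n - 1) * g s := by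
  obtain ⟨ε, hε, hεg⟩ := mem_nhdsGT_iff_exists_Ioo_subset.1 hgpos
  filter_upwards [Ioo_mem_nhdsGT hε] with x hx
  rw [← intervalIntegral.integral_of_le hx.1.le]
  refine intervalIntegral.intervalIntegral_pos_of_pos_on
    ((intervalIntegrable_iff_integrableOn_Ioc_of_le hx.1.le).2
      (hint.mono_set Ioc_subset_Ioi_self)) (fun s hs => ?_) hx.1
  exact mul_pos (pow_pos hs.1 _) (hεg ⟨hs.1, hs.2.trans hx.2⟩)

theorem isTheta_pow_mul_nhdsGT_zero (hn : n ≠ 0) {G : ℝ → ℝ} {c : ℝ} (hc : 0 < c)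
    (hg0 : ∀ s, 0 < s → 0 ≤ g s) (hint : IntegrableOn (fun s => s ^ (n - 1) * g s) (Ioi 0))
    (hG : ∀ x, G x = c * ∫ s in Ioc 0 x, s ^ (n - 1) * g s)
    (hgpos : ∀ᶠ x in 𝓝[>] 0, 0 < g x) (hGpos : ∀ᶠ x in 𝓝[>] 0, 0 < G x) {β' α' β α : ℝ}
    (hgOR : MemOR (fun r => g (1 / r)) β' α') (hGOR : MemOR (fun r => G (1 / r)) β α)
    (hα : α < 0) : G =Θ[𝓝[>] 0] fun x => x ^ n * g x := by
  have hintx : ∀ x, IntegrableOn (fun s => s ^ (n - 1) * g s) (Ioc 0 x) :=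
    fun x => hint.mono_set Ioc_subset_Ioi_self
  have hg0x : ∀ x, ∀ s ∈ Ioc 0 x, 0 ≤ g s := fun x s hs => hg0 s hs.1
  obtain ⟨m, hm, _, _, hlow⟩ := hgOR.exists_bounds_nhdsGT_zero hgpos two_pos
  obtain ⟨K, hK, hhalf⟩ := hGOR.exists_eventually_le_mul hα hGpos one_half_pos
  obtain ⟨_, _, M, hM, hup⟩ := hgOR.exists_bounds_nhdsGT_zero hgpos (by linarith : 0 < K)
  refine isTheta_of_le_of_le (c₁ := c * (m / 2 ^ n)) (c₂ := c * (2 * M)) (by positivity) ?_ ?_ ?_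
  · filter_upwards [hgpos, self_mem_nhdsWithin] with x hgx (hx : 0 < x)
    positivity
  · filter_upwards [hlow, self_mem_nhdsWithin] with x hlow hx
    rw [hG, mul_assoc]
    exact mul_le_mul_of_nonneg_left (pow_mul_le_setIntegral_Ioc hn hx (hg0x x) (hintx x) hm.le
      fun s hs => (hlow s (Ioc_subset_Icc_self hs)).1) hc.le
  · filter_upwards [hup, hhalf, self_mem_nhdsWithin] with x hup hhalf hx
    rw [hG, hG] at hhalf
    rw [hG, mul_assoc]
    refine mul_le_mul_of_nonneg_left (setIntegral_Ioc_le_pow_mul hn hx (hg0x x) (hintx x) hK hM.le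
      (fun s hs => (hup s (Ioc_subset_Icc_self hs)).2) ?_) hc.le
    exact le_of_mul_le_mul_left (by linarith) hc

end RadialIntegral

theorem or_distribution_to_density_general (n : ℕ) (hn : 1 ≤ n)
    (g : ℝ → ℝ) (hg0 : ∀ s : ℝ, 0 ≤ g s)
    (hgint : IntegrableOn (fun s => s ^ (n - 1) * g s) (Set.Ioi (0 : ℝ)))
    (G : ℝ → ℝ)
    (hG : ∀ lam : ℝ, G lam = 2 * π ^ ((n : ℝ) / 2) / Real.Gamma ((n : ℝ) / 2) *
      ∫ s in Set.Ioc (0 : ℝ) lam, s ^ (n - 1) * g s)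
    (ε : ℝ) (hε : 0 < ε) (hgpos : ∀ x ∈ Set.Ioc (0 : ℝ) ε, 0 < g x)
    (β' α' : ℝ) (hgOR : MemOR (fun r => g (1 / r)) β' α')
    (α β : ℝ) (hα : α < 0)
    (hGOR : MemOR (fun r => G (1 / r)) β α) :
    MemOR (fun r => g (1 / r)) (β + n) (α + n) ∧
      ((fun r => G (1 / r)) =O[atTop] fun r => g (1 / r) / r ^ (n : ℝ)) ∧
      ((fun r => g (1 / r) / r ^ (n : ℝ)) =O[atTop] fun r => G (1 / r)) := by
  have hc : 0 < 2 * π ^ ((n : ℝ) / 2) / Real.Gamma ((n : ℝ) / 2) :=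
    div_pos (by positivity) (Real.Gamma_pos_of_pos (by positivity))
  have hgpos' : ∀ᶠ x in 𝓝[>] 0, 0 < g x := eventually_of_mem (Ioc_mem_nhdsGT hε) hgpos
  have hGpos : ∀ᶠ x in 𝓝[>] 0, 0 < G x := by
    filter_upwards [eventually_setIntegral_Ioc_pos hgint hgpos'] with x hx
    rw [hG]
    positivity
  have hΘ₀ := isTheta_pow_mul_nhdsGT_zero (by omega) hc (fun s _ => hg0 s) hgint hG hgpos' hGpos
    hgOR hGOR hα
  have hinv : Tendsto (fun r : ℝ => 1 / r) atTop (𝓝[>] 0) := by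
    simpa only [one_div] using tendsto_inv_atTop_nhdsGT_zero
  have hΘ : (fun r => G (1 / r)) =Θ[atTop] fun r => g (1 / r) / r ^ (n : ℝ) := by
    refine (hΘ₀.comp_tendsto hinv).trans_eventuallyEq (.of_forall fun r => ?_)
    simp only [Function.comp_apply, rpow_natCast, one_div_pow, one_div_mul_eq_div]
  refine ⟨?_, hΘ.isBigO, hΘ.symm.isBigO⟩
  refine (hGOR.mul_rpow n).congr_isTheta ((hΘ.mul (isTheta_refl _ _)).trans_eventuallyEq ?_)
    ?_ (hinv.eventually hgpos')
  · filter_upwards [eventually_gt_atTop 0] with r hr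
    exact div_mul_cancel₀ _ (rpow_pos_of_pos hr _).ne'
  · filter_upwards [hinv.eventually hGpos, eventually_gt_atTop 0] with r hGr hr
    positivity

theorem or_distribution_to_density (n : ℕ) (hn : 1 ≤ n)
    (g : ℝ → ℝ) (hg0 : ∀ s : ℝ, 0 ≤ g s) (hgmeas : Measurable g)
    (hgint : IntegrableOn (fun s => s ^ (n - 1) * g s) (Set.Ioi (0 : ℝ)))
    (G : ℝ → ℝ)
    (hG : ∀ lam : ℝ, G lam = 2 * π ^ ((n : ℝ) / 2) / Real.Gamma ((n : ℝ) / 2) *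
      ∫ s in Set.Ioc (0 : ℝ) lam, s ^ (n - 1) * g s)
    (ε : ℝ) (hε : 0 < ε) (hgpos : ∀ x ∈ Set.Ioc (0 : ℝ) ε, 0 < g x)
    (β' α' : ℝ) (hβ'α' : β' ≤ α') (hgOR : MemOR (fun r => g (1 / r)) β' α')
    (α β : ℝ) (hβα : β ≤ α) (hα : α < 0)
    (hGOR : MemOR (fun r => G (1 / r)) β α) :
    MemOR (fun r => g (1 / r)) (β + n) (α + n) ∧
      ((fun r => G (1 / r)) =O[atTop] fun r => g (1 / r) / r ^ (n : ℝ)) ∧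
      ((fun r => g (1 / r) / r ^ (n : ℝ)) =O[atTop] fun r => G (1 / r)) :=
  or_distribution_to_density_general n hn g hg0 hgint G hG ε hε hgpos β' α' hgOR α β hα hGOR
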